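/- arXiv:1501.06533 — 2 statements merged into one kernel-verified Lean document; each statement's English description precedes it below -/
import Mathlib

section
/- Let p be prime and A ⊆ Z/pZ nonempty with |A| = k, and let h, r ≥ 1 with r | h, m = h/r, and h ≤ r·k. Then |h^(r)A| ≥ min(p, h·k − r·m² + 1). -/
/-
Write `h = m r` and let `m^∧A` be the set of sums of `m` distinct elements of `A`. A sum of `r`
elements of `m^∧A` uses every element of `A` at most `r` times, so `r • m^∧A ⊆ h^(r)A`.
Iterated Cauchy–Davenport gives `|r • B| ≥ min(p, r(|B| - 1) + 1)`, and the Dias da Silva–Hamidoune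
theorem gives `|m^∧A| ≥ min(p, m(k - m) + 1)`; together `|h^(r)A| ≥ min(p, rm(k - m) + 1)`.

Dias da Silva–Hamidoune is proved by the polynomial method. If `m^∧A` lay in a set `E` with
`|E| = e < p`, then `f = ∏_{ε ∈ E} (x₁ + ⋯ + xₘ - ε) · ∏_{i<j} (xⱼ - xᵢ)` would vanish on a grid
`S₁ × ⋯ × Sₘ ⊆ Aᵐ` with `|Sᵢ| = tᵢ + 1` and `∑ tᵢ = deg f`. The coefficient formula
`[xᵗ] f = ∑_{x ∈ grid} f(x) / ∏ᵢ ∏_{s ∈ Sᵢ, s ≠ xᵢ} (xᵢ - s)` then forces `[xᵗ] f = 0`, whereas a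
Vandermonde determinant shows `[xᵗ] f · ∏ tᵢ! = e! ∏_{i<j} (tⱼ - tᵢ)`, which is nonzero mod `p`.
-/

open Finset Pointwise

/-- The generalized sumset `h^(r)A`: sums of `h` elements of `A`,
each element used at most `r` times. -/
def genSum {G : Type*} [AddCommGroup G] (r h : ℕ) (A : Finset G) : Set G :=
  {x | ∃ c : G → ℕ, (∀ a, c a ≤ r) ∧ (∀ a, c a ≠ 0 → a ∈ A) ∧
    (∑ a ∈ A, c a) = h ∧ (∑ a ∈ A, c a • a) = x}

/-- The `r`-fold ordinary sumset `B + ⋯ + B` of a set `B`. -/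
def iterSum {G : Type*} [AddCommGroup G] (r : ℕ) (B : Set G) : Set G :=
  {x | ∃ f : Fin r → G, (∀ i, f i ∈ B) ∧ (∑ i, f i) = x}

/-- A set of integers is an arithmetic progression. -/
def IsAPSet (S : Set ℤ) : Prop :=
  ∃ a d : ℤ, ∃ n : ℕ, 0 < d ∧ S = ↑((Finset.range n).image fun i : ℕ => a + d * (i : ℤ))

open Polynomial

section NodalGridSum

variable {F : Type*} [Field F] [DecidableEq F]

lemma sum_pow_mul_nodalWeight (S : Finset F) {b : ℕ} (hb : b < #S) :
    ∑ s ∈ S, s ^ b * Lagrange.nodalWeight S id s = if b = #S - 1 then 1 else 0 := by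
  have := Lagrange.coeff_eq_sum (v := id) Function.injective_id.injOn
    (P := (X : F[X]) ^ b) (by simpa using (WithBot.coe_lt_coe.mpr hb))
  simp only [coeff_X_pow, eval_pow, eval_X, id, eq_comm (a := #S - 1)] at this
  simp [Lagrange.nodalWeight, div_eq_mul_inv, prod_inv_distrib, this]

variable {ι : Type*} [Fintype ι] [DecidableEq ι]

/-- For a polynomial function `f` of total degree at most `∑ i, (#(S i) - 1)`, this is the
coefficient of `∏ i, x i ^ (#(S i) - 1)` in `f` (coefficient formula of Lasoń, Karasev–Petrov). -/
def nodalGridSum (S : ι → Finset F) (f : (ι → F) → F) : F :=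
  ∑ x ∈ Fintype.piFinset S, f x * ∏ i, Lagrange.nodalWeight (S i) id (x i)

lemma nodalGridSum_sum {κ : Type*} (S : ι → Finset F) (s : Finset κ) (f : κ → (ι → F) → F) :
    nodalGridSum S (fun x => ∑ k ∈ s, f k x) = ∑ k ∈ s, nodalGridSum S (f k) := by
  simp only [nodalGridSum, sum_mul]
  exact sum_comm

lemma nodalGridSum_const_mul (S : ι → Finset F) (c : F) (f : (ι → F) → F) :
    nodalGridSum S (fun x => c * f x) = c * nodalGridSum S f := by
  simp only [nodalGridSum, mul_sum, mul_assoc]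

lemma nodalGridSum_eq_zero (S : ι → Finset F) {f : (ι → F) → F}
    (hf : ∀ x ∈ Fintype.piFinset S, f x = 0) : nodalGridSum S f = 0 :=
  sum_eq_zero fun x hx => by rw [hf x hx, zero_mul]

lemma nodalGridSum_monomial (S : ι → Finset F) {t b : ι → ℕ} (hS : ∀ i, #(S i) = t i + 1)
    (hb : ∑ i, b i ≤ ∑ i, t i) :
    nodalGridSum S (fun x => ∏ i, x i ^ b i) = if b = t then 1 else 0 := by
  simp only [nodalGridSum, ← prod_mul_distrib]
  rw [← prod_univ_sum S fun i s => s ^ b i * Lagrange.nodalWeight (S i) id s]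
  split_ifs with hbt
  · subst hbt
    refine prod_eq_one fun i _ => ?_
    rw [sum_pow_mul_nodalWeight _ (by rw [hS i]; omega), hS, if_pos (by omega)]
  · obtain ⟨j, hj⟩ : ∃ j, b j < t j := by
      by_contra! hle
      exact hbt (funext fun i => ((sum_eq_sum_iff_of_le fun i _ => hle i).mp
        (le_antisymm (sum_le_sum fun i _ => hle i) hb) i (mem_univ i)).symm)
    refine prod_eq_zero (mem_univ j) ?_
    rw [sum_pow_mul_nodalWeight _ (by rw [hS j]; omega), hS, if_neg (by omega)]

end NodalGridSum

lemma prod_Ioi_sub_eq_sum_sign_mul_prod_pow {R : Type*} [CommRing R] {n : ℕ} (x : Fin n → R) :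
    ∏ i, ∏ j ∈ Ioi i, (x j - x i) =
      ∑ σ : Equiv.Perm (Fin n), (Equiv.Perm.sign σ : R) * ∏ i, x i ^ (σ i : ℕ) := by
  rw [← Matrix.det_vandermonde, ← Matrix.det_transpose, Matrix.det_apply']
  simp [Matrix.vandermonde_apply]

lemma sum_piAntidiag_multinomial_mul_ite {R : Type*} [CommSemiring R] {ι : Type*} [Fintype ι]
    [DecidableEq ι] (c t : ι → ℕ) (d : ℕ) :
    ∑ a ∈ piAntidiag univ d,
        (Nat.multinomial univ a : R) * (if (fun i => a i + c i) = t then 1 else 0) =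
      if (∀ i, c i ≤ t i) ∧ d + ∑ i, c i = ∑ i, t i
        then (Nat.multinomial univ (fun i => t i - c i) : R) else 0 := by
  simp only [mul_ite, mul_one, mul_zero]
  by_cases hct : ∀ i, c i ≤ t i
  · have hsolve : ∀ a : ι → ℕ, (fun i => a i + c i) = t ↔ a = fun i => t i - c i := fun a => by
      simp only [funext_iff]
      exact forall_congr' fun i => by have := hct i; omega
    have hsum : ∑ i, (t i - c i) = d ↔ d + ∑ i, c i = ∑ i, t i := by
      rw [sum_tsub_distrib _ fun i _ => hct i]
      have := sum_le_sum fun i (_ : i ∈ univ) => hct i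
      omega
    simp only [hsolve, sum_ite_eq', mem_piAntidiag, hsum, hct]
    simp
  · rw [if_neg fun h => hct h.1]
    refine sum_eq_zero fun a _ => if_neg fun h => hct fun i => ?_
    rw [← h]
    exact Nat.le_add_left _ _

lemma Nat.multinomial_sub_mul_prod_factorial {ι : Type*} [DecidableEq ι] (s : Finset ι)
    (c t : ι → ℕ) (hct : ∀ i ∈ s, c i ≤ t i) :
    Nat.multinomial s (fun i => t i - c i) * ∏ i ∈ s, (t i).factorial =
      (∑ i ∈ s, (t i - c i)).factorial * ∏ i ∈ s, (t i).descFactorial (c i) := by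
  rw [← Nat.multinomial_spec, mul_comm (∏ i ∈ s, _), mul_assoc, ← prod_mul_distrib]
  exact congrArg _ (prod_congr rfl fun i hi => (Nat.factorial_mul_descFactorial (hct i hi)).symm)

/-- The coefficient of `∏ i, x i ^ t i` in `(∑ i, x i) ^ e * ∏ i, ∏ j ∈ Ioi i, (x j - x i)`,
where `e = ∑ i, t i - ∑ i, i`. -/
noncomputable def vandermondeCoeff (R : Type*) [CommRing R] {n : ℕ} (t : Fin n → ℕ) : R :=
  ∑ σ : Equiv.Perm (Fin n), (Equiv.Perm.sign σ : R) *
    if ∀ i, (σ i : ℕ) ≤ t i then (Nat.multinomial univ fun i => t i - σ i : R) else 0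

lemma vandermondeCoeff_mul_prod_factorial {R : Type*} [CommRing R] [IsDomain R] {n : ℕ}
    (t : Fin n → ℕ) {e : ℕ} (hsum : ∑ i, t i = e + ∑ i : Fin n, (i : ℕ)) :
    vandermondeCoeff R t * ∏ i, ((t i).factorial : R) =
      (e.factorial : R) * ∏ i, ∏ j ∈ Ioi i, ((t j : R) - t i) := by
  rw [← Matrix.det_vandermonde, Matrix.det_eval_matrixOfPolynomials_eq_det_vandermonde _
    (fun j => descPochhammer R j) (fun j => descPochhammer_natDegree R j)
    (fun j => monic_descPochhammer R j), ← Matrix.det_transpose, Matrix.det_apply',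
    vandermondeCoeff, sum_mul, mul_sum]
  refine sum_congr rfl fun σ _ => ?_
  simp only [Matrix.transpose_apply, Matrix.of_apply, descPochhammer_eval_eq_descFactorial]
  split_ifs with hσt
  · have hperm : ∑ i, ((σ i : Fin n) : ℕ) = ∑ i : Fin n, (i : ℕ) :=
      Equiv.sum_comp σ fun i => (i : ℕ)
    have he : ∑ i, (t i - σ i) = e := by
      rw [sum_tsub_distrib _ fun i _ => hσt i, hperm, hsum, Nat.add_sub_cancel]
    have := Nat.multinomial_sub_mul_prod_factorial univ (fun i => (σ i : ℕ)) t fun i _ => hσt i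
    rw [he] at this
    rw [mul_assoc, ← Nat.cast_prod, ← Nat.cast_mul, this]
    push_cast
    ring
  · obtain ⟨i, hi⟩ := not_forall.mp hσt
    have hzero : ∏ i, ((t i).descFactorial (σ i) : R) = 0 := prod_eq_zero (mem_univ i) <| by
      rw [Nat.descFactorial_eq_zero_iff_lt.mpr (not_le.mp hi), Nat.cast_zero]
    rw [hzero]
    ring

lemma ZMod.vandermondeCoeff_ne_zero {p : ℕ} [Fact p.Prime] {n : ℕ} {t : Fin n → ℕ}
    (ht : StrictMono t) (htp : ∀ i, t i < p) {e : ℕ}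
    (hsum : ∑ i, t i = e + ∑ i : Fin n, (i : ℕ)) (hep : e < p) :
    vandermondeCoeff (ZMod p) t ≠ 0 := by
  intro h0
  have key := vandermondeCoeff_mul_prod_factorial (R := ZMod p) t hsum
  rw [h0, zero_mul, eq_comm] at key
  refine mul_ne_zero ?_ (prod_ne_zero_iff.mpr fun i _ => prod_ne_zero_iff.mpr fun j hj => ?_) key
  · rw [Ne, ZMod.natCast_eq_zero_iff, Fact.out (p := p.Prime) |>.dvd_factorial]
    omega
  · have hij : t i < t j := ht (mem_Ioi.mp hj)
    rw [← Nat.cast_sub hij.le, Ne, ZMod.natCast_eq_zero_iff]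
    exact Nat.not_dvd_of_pos_of_lt (by omega) (by have := htp j; omega)

section VandermondeGrid

variable {F : Type*} [Field F] [DecidableEq F]

lemma nodalGridSum_sum_pow_mul_vandermonde {n : ℕ} (S : Fin n → Finset F) {t : Fin n → ℕ}
    {d e : ℕ} (hS : ∀ i, #(S i) = t i + 1) (hsum : ∑ i, t i = e + ∑ i : Fin n, (i : ℕ))
    (hd : d ≤ e) :
    nodalGridSum S (fun x => (∑ i, x i) ^ d * ∏ i, ∏ j ∈ Ioi i, (x j - x i)) =
      if d = e then vandermondeCoeff F t else 0 := by
  have hexpand : ∀ x : Fin n → F, (∑ i, x i) ^ d * ∏ i, ∏ j ∈ Ioi i, (x j - x i) =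
      ∑ σ : Equiv.Perm (Fin n), ∑ a ∈ piAntidiag univ d,
        (Equiv.Perm.sign σ : F) * ((Nat.multinomial univ a : F) * ∏ i, x i ^ (a i + σ i)) := by
    intro x
    rw [sum_pow_eq_sum_piAntidiag, prod_Ioi_sub_eq_sum_sign_mul_prod_pow, sum_mul_sum, sum_comm]
    refine sum_congr rfl fun σ _ => sum_congr rfl fun a _ => ?_
    simp only [pow_add, prod_mul_distrib]
    ring
  have hperm : ∀ σ : Equiv.Perm (Fin n), ∑ i, ((σ i : Fin n) : ℕ) = ∑ i : Fin n, (i : ℕ) :=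
    fun σ => Equiv.sum_comp σ fun i => (i : ℕ)
  simp only [hexpand, nodalGridSum_sum, nodalGridSum_const_mul]
  have hterm : ∀ σ : Equiv.Perm (Fin n), ∀ a ∈ piAntidiag univ d,
      nodalGridSum S (fun x => ∏ i, x i ^ (a i + σ i)) =
        if (fun i => a i + (σ i : ℕ)) = t then 1 else 0 := by
    intro σ a ha
    refine nodalGridSum_monomial S hS ?_
    rw [sum_add_distrib, (mem_piAntidiag.mp ha).1, hperm, hsum]
    omega
  calc _ = ∑ σ : Equiv.Perm (Fin n), (Equiv.Perm.sign σ : F) *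
        if (∀ i, (σ i : ℕ) ≤ t i) ∧ d + ∑ i, ((σ i : Fin n) : ℕ) = ∑ i, t i
          then (Nat.multinomial univ fun i => t i - σ i : F) else 0 := by
        refine sum_congr rfl fun σ _ => ?_
        rw [← mul_sum, sum_congr rfl fun a ha => by rw [hterm σ a ha],
          sum_piAntidiag_multinomial_mul_ite]
        congr 1
        -- the two `if`s differ only in their `Decidable` instances
        split_ifs <;> rfl
    _ = _ := by
        simp only [hperm, hsum, Nat.add_right_cancel_iff]
        split_ifs with hde
        · simp [hde, vandermondeCoeff]
        · simp [hde]

lemma nodalGridSum_eval_sum_mul_vandermonde {n : ℕ} (S : Fin n → Finset F) {t : Fin n → ℕ}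
    {e : ℕ} (hS : ∀ i, #(S i) = t i + 1) (hsum : ∑ i, t i = e + ∑ i : Fin n, (i : ℕ))
    {P : F[X]} (hP : P.natDegree ≤ e) :
    nodalGridSum S (fun x => P.eval (∑ i, x i) * ∏ i, ∏ j ∈ Ioi i, (x j - x i)) =
      P.coeff e * vandermondeCoeff F t := by
  simp only [eval_eq_sum_range' (Nat.lt_succ_of_le hP), sum_mul, mul_assoc, nodalGridSum_sum,
    nodalGridSum_const_mul]
  rw [sum_congr rfl fun d hd => by
    rw [nodalGridSum_sum_pow_mul_vandermonde S hS hsum (Nat.le_of_lt_succ (mem_range.mp hd))]]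
  simp [mul_ite]

end VandermondeGrid

/-- The restricted sumset `m^∧A`. -/
def restrictedSumset {G : Type*} [AddCommMonoid G] [DecidableEq G] (m : ℕ) (A : Finset G) :
    Finset G :=
  (A.powersetCard m).image fun B => ∑ a ∈ B, a

lemma sum_mem_restrictedSumset {G : Type*} [AddCommMonoid G] [DecidableEq G] {A : Finset G}
    {m : ℕ} {x : Fin m → G} (hx : Function.Injective x) (hxA : ∀ i, x i ∈ A) :
    ∑ i, x i ∈ restrictedSumset m A := by
  refine mem_image.mpr
    ⟨univ.image x, mem_powersetCard.mpr ⟨?_, ?_⟩, sum_image fun i _ j _ h => hx h⟩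
  · exact image_subset_iff.mpr fun i _ => hxA i
  · rw [card_image_of_injective _ hx, card_univ, Fintype.card_fin]

lemma restrictedSumset_nonempty {G : Type*} [AddCommMonoid G] [DecidableEq G] {A : Finset G}
    {m : ℕ} (hm : m ≤ #A) : (restrictedSumset m A).Nonempty :=
  (powersetCard_nonempty.mpr hm).image _

lemma sum_range_min_sub_mul (K e m : ℕ) :
    ∑ j ∈ range m, min K (e - K * j) = min e (K * m) := by
  induction m with
  | zero => simp
  | succ m ih =>
    rw [sum_range_succ, ih, Nat.mul_succ]
    omega

/-- The increments `t i - i` lie in `[0, K]` and are filled up to `K` from the last index down. -/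
lemma exists_strictMono_sum_eq {m K e : ℕ} (he : e ≤ K * m) :
    ∃ t : Fin m → ℕ, StrictMono t ∧ (∀ i, t i < m + K) ∧ ∑ i, t i = e + ∑ i : Fin m, (i : ℕ) := by
  set δ : ℕ → ℕ := fun j => min K (e - K * j)
  have hδ : Antitone δ := fun i j hij =>
    min_le_min_left _ (Nat.sub_le_sub_left (Nat.mul_le_mul_left K hij) e)
  refine ⟨fun i => i + δ (Fin.rev i), fun i j hij => ?_, fun i => ?_, ?_⟩
  · have : δ (Fin.rev i) ≤ δ (Fin.rev j) := hδ (Fin.rev_le_rev.mpr hij.le)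
    exact Nat.add_lt_add_of_lt_of_le hij this
  · exact Nat.add_lt_add_of_lt_of_le i.isLt (min_le_left _ _)
  · rw [sum_add_distrib, add_comm,
      Fintype.sum_equiv Fin.revPerm (fun i => δ (Fin.rev i)) (fun i => δ i) fun _ => rfl,
      Fin.sum_univ_eq_sum_range δ, sum_range_min_sub_mul, min_eq_left he]

lemma ZMod.lt_card_restrictedSumset {p : ℕ} [Fact p.Prime] (A : Finset (ZMod p)) {n e : ℕ}
    {t : Fin n → ℕ} (ht : StrictMono t) (htA : ∀ i, t i < #A)
    (hsum : ∑ i, t i = e + ∑ i : Fin n, (i : ℕ)) (hep : e < p) :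
    e < #(restrictedSumset n A) := by
  by_contra! hcard
  obtain ⟨E, hDE, -, hEcard⟩ := exists_subsuperset_card_eq (subset_univ _) hcard
    (by simpa [ZMod.card] using hep.le)
  choose S hSA hScard using fun i => exists_subset_card_eq (s := A) (htA i)
  have hvanish : ∀ x ∈ Fintype.piFinset S,
      (Lagrange.nodal E id).eval (∑ i, x i) * ∏ i, ∏ j ∈ Ioi i, (x j - x i) = 0 := by
    intro x hx
    have hxA : ∀ i, x i ∈ A := fun i => hSA i (Fintype.mem_piFinset.mp hx i)
    by_cases hinj : Function.Injective x
    · exact mul_eq_zero_of_left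
        (Lagrange.eval_nodal_at_node (v := id) (hDE (sum_mem_restrictedSumset hinj hxA))) _
    · rw [← Matrix.det_vandermonde, Matrix.det_vandermonde_eq_zero_iff.mpr, mul_zero]
      exact Function.not_injective_iff.mp hinj
  have hgrid := nodalGridSum_eval_sum_mul_vandermonde S hScard hsum
    ((Lagrange.natDegree_nodal (v := id)).trans hEcard).le
  rw [nodalGridSum_eq_zero S hvanish, ← hEcard, ← Lagrange.natDegree_nodal (v := id),
    Lagrange.nodal_monic.coeff_natDegree, one_mul] at hgrid
  have hAp : #A ≤ p := by simpa [ZMod.card] using card_le_univ A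
  exact ZMod.vandermondeCoeff_ne_zero ht (fun i => (htA i).trans_le hAp) hsum hep hgrid.symm

/-- The Dias da Silva–Hamidoune theorem (Erdős–Heilbronn conjecture). -/
theorem ZMod.min_le_card_restrictedSumset {p : ℕ} [Fact p.Prime] (A : Finset (ZMod p)) {m : ℕ}
    (hm : m ≤ #A) : min p (m * (#A - m) + 1) ≤ #(restrictedSumset m A) := by
  have hp := (Fact.out : p.Prime).two_le
  obtain ⟨t, ht, htA, hsum⟩ := exists_strictMono_sum_eq (m := m) (K := #A - m)
    (e := min (p - 1) (m * (#A - m))) (by rw [mul_comm]; exact min_le_right _ _)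
  have := ZMod.lt_card_restrictedSumset A ht (fun i => by have := htA i; omega) hsum (by omega)
  omega

theorem ZMod.min_le_card_nsmul {p : ℕ} (hp : p.Prime) {B : Finset (ZMod p)} (hB : B.Nonempty)
    (r : ℕ) : min p (r * (#B - 1) + 1) ≤ #(r • B) := by
  induction r with
  | zero => simp
  | succ r ih =>
    have := ZMod.cauchy_davenport hp (hB.nsmul (n := r)) hB
    rw [succ_nsmul, Nat.succ_mul]
    have := hB.card_pos
    omega

section GenSum
variable {G : Type*} [AddCommGroup G] {A : Finset G}

lemma zero_mem_genSum (r : ℕ) : (0 : G) ∈ genSum r 0 A :=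
  ⟨0, by simp, by simp, by simp, by simp⟩

lemma add_mem_genSum {r r' h h' : ℕ} {x y : G} (hx : x ∈ genSum r h A) (hy : y ∈ genSum r' h' A) :
    x + y ∈ genSum (r + r') (h + h') A := by
  obtain ⟨c, hcr, hcA, hch, rfl⟩ := hx
  obtain ⟨c', hcr', hcA', hch', rfl⟩ := hy
  refine ⟨c + c', fun a => add_le_add (hcr a) (hcr' a), fun a ha => ?_, ?_, ?_⟩
  · by_cases hca : c a = 0
    · exact hcA' a (by simpa [hca] using ha)
    · exact hcA a hca
  · simp [sum_add_distrib, hch, hch']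
  · simp [add_smul, sum_add_distrib]

lemma nsmul_subset_genSum [DecidableEq G] {B : Finset G} {s m : ℕ} (hB : ↑B ⊆ genSum s m A)
    (r : ℕ) : ↑(r • B) ⊆ genSum (s * r) (m * r) A := by
  induction r with
  | zero => simpa using zero_mem_genSum 0
  | succ r ih =>
    rw [succ_nsmul, Finset.coe_add]
    rintro _ ⟨x, hx, y, hy, rfl⟩
    exact add_mem_genSum (ih hx) (hB hy)

lemma restrictedSumset_subset_genSum [DecidableEq G] (m : ℕ) :
    ↑(restrictedSumset m A) ⊆ genSum 1 m A := by
  intro x hx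
  obtain ⟨B, hB, rfl⟩ := mem_image.mp hx
  obtain ⟨hBA, hBm⟩ := mem_powersetCard.mp hB
  refine ⟨fun a => if a ∈ B then 1 else 0, fun a => by by_cases a ∈ B <;> simp [*],
    fun a ha => ?_, ?_, ?_⟩
  · exact hBA (by simpa using ha)
  · rw [sum_boole, filter_mem_eq_inter, inter_eq_right.mpr hBA, hBm]
    simp
  · simp only [ite_smul, one_smul, zero_smul, sum_ite_mem, inter_eq_right.mpr hBA]

end GenSum

theorem stmt8_general (p : ℕ) (hp : p.Prime) (A : Finset (ZMod p)) (k h m r : ℕ)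
    (hk : A.card = k)
    (hr : 1 ≤ r) (hh : h = m * r) (h2 : h ≤ r * k) :
    ((genSum r h A).ncard : ℤ) ≥
      min (p : ℤ) ((h : ℤ) * k - (r : ℤ) * (m : ℤ) ^ 2 + 1) := by
  have := Fact.mk hp
  subst hk hh
  have hmA : m ≤ #A := Nat.le_of_mul_le_mul_left (by rwa [mul_comm]) hr
  have hEH := ZMod.min_le_card_restrictedSumset A hmA
  have hCD := ZMod.min_le_card_nsmul hp (restrictedSumset_nonempty hmA) r
  have hsub : #(r • restrictedSumset m A) ≤ (genSum r (m * r) A).ncard := by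
    have := nsmul_subset_genSum (restrictedSumset_subset_genSum (A := A) m) r
    rw [one_mul] at this
    exact Set.ncard_coe_finset _ ▸ Set.ncard_le_ncard this (Set.toFinite _)
  have hbound : min p (r * (m * (#A - m)) + 1) ≤
      min p (r * (#(restrictedSumset m A) - 1) + 1) := by
    by_cases hcase : m * (#A - m) + 1 ≤ #(restrictedSumset m A)
    · exact min_le_min_left _ (by gcongr; omega)
    · have := Nat.le_mul_of_pos_left (#(restrictedSumset m A) - 1) hr
      omega
  rw [ge_iff_le, show ((m * r : ℕ) : ℤ) * #A - r * m ^ 2 + 1 = ((r * (m * (#A - m)) + 1 : ℕ) : ℤ)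
    by push_cast [Nat.cast_sub hmA]; ring]
  exact_mod_cast hbound.trans (hCD.trans hsub)

theorem stmt8 (p : ℕ) (hp : p.Prime) (A : Finset (ZMod p)) (k h m r : ℕ)
    (hA : A.Nonempty) (hk : A.card = k)
    (hh1 : 1 ≤ h) (hr : 1 ≤ r) (hh : h = m * r) (h2 : h ≤ r * k) :
    ((genSum r h A).ncard : ℤ) ≥
      min (p : ℤ) ((h : ℤ) * k - (r : ℤ) * (m : ℤ) ^ 2 + 1) :=
  stmt8_general p hp A k h m r hk hr hh h2
end

section
/- Let A = {a_1 < ... < a_k} be a finite set of integers, h = m·r + ε with 1 ≤ ε ≤ r − 1 and m + ε ≤ k, and let B = (r−1)·(m^∧A) + (m+ε)^∧A. Then |h^(r)A \ B| ≥ ε² − ε, and consequently |h^(r)A| ≥ h·k − m²·r + 1 − 2·m·ε − ε. -/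
open Finset Pointwise

/-!
Let `a₀ < a₁ < ⋯` enumerate `A` (extended strictly increasingly beyond `k`). An element of
`h^(r)A` is `∑ j, a (p j)` for a sorted sequence `p` of `h` indices taking each value at most
`r` times. If `p ≤ p'` are two such sequences, lowering `p'` by one at the first place where it
exceeds `p` keeps it admissible and strictly decreases its sum, so there is a chain of
`∑ j, (p' j - p j) + 1` distinct elements of `h^(r)A` between the two sums.

From the least sequence `j ↦ j / r` to its mirror image this chain has
`h k - m² r + 1 - 2 m ε - ε` elements. The sequence consisting of `r` copies of `0, …, m - 1`
followed by `m, …, m + ε - 1` realises `min B`, and the chain from `j ↦ j / r` to it has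
`(ε² - ε) / 2` elements below `min B`; replacing `A` by `-A` gives as many above `max B`.
-/

variable {h r m ε : ℕ}

lemma Finset.card_le_of_forall_lt_add {F : Finset ℕ} (hF : ∀ i ∈ F, ∀ j ∈ F, j < i + r) :
    #F ≤ r := by
  rcases F.eq_empty_or_nonempty with rfl | hne
  · simp
  calc #F ≤ #(Ico (F.min' hne) (F.min' hne + r)) :=
        card_le_card fun j hj => mem_Ico.2 ⟨F.min'_le j hj, hF _ (F.min'_mem hne) j hj⟩
    _ = r := by simp

lemma Finset.sum_range_card_le_sum {M : Type*} [AddCommMonoid M] [PartialOrder M]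
    [IsOrderedAddMonoid M] {a : ℕ → M} (ha : Monotone a) (I : Finset ℕ) :
    ∑ i ∈ range #I, a i ≤ ∑ i ∈ I, a i := by
  induction I using Finset.induction_on_max with
  | empty => simp
  | insert x s hlt ih =>
    have hx : x ∉ s := fun hx => lt_irrefl x (hlt x hx)
    have hs : #s ≤ x := by simpa using card_le_card fun y hy => mem_range.2 (hlt y hy)
    rw [card_insert_of_notMem hx, sum_range_succ, sum_insert hx, add_comm (a x)]
    exact add_le_add ih (ha hs)

lemma Finset.exists_strictMono_image_range (A : Finset ℤ) :
    ∃ a : ℕ → ℤ, StrictMono a ∧ (range #A).image a = A := by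
  set f := A.orderEmbOfFin rfl
  set C := ∑ x ∈ A, |x|
  have hC : ∀ x ∈ A, x ≤ C := fun x hx =>
    (le_abs_self x).trans (single_le_sum (fun y _ => abs_nonneg y) hx)
  refine ⟨fun i => if hi : i < #A then f ⟨i, hi⟩ else C + 1 + i, fun i j hij => ?_, ?_⟩
  · dsimp only
    split_ifs with hi hj hj
    · exact f.strictMono hij
    · have := hC (f ⟨i, hi⟩) (A.orderEmbOfFin_mem rfl _); omega
    · omega
    · omega
  · ext x
    simp only [mem_image, mem_range]
    constructor
    · rintro ⟨i, hi, rfl⟩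
      rw [dif_pos hi]
      exact A.orderEmbOfFin_mem rfl _
    · intro hx
      obtain ⟨i, rfl⟩ : x ∈ Set.range f := by rwa [A.range_orderEmbOfFin]
      exact ⟨i, i.2, dif_pos i.2⟩

section BlockSums

lemma Nat.mul_add_div_eq {t : ℕ} (ht : t < r) : (m * r + t) / r = m :=
  Nat.div_eq_of_lt_le (Nat.le_add_right _ _) (by rw [Nat.add_one_mul]; omega)

lemma div_add_sub_lt {j : ℕ} (hj : j < m * r + ε) (hεr : ε ≤ r) :
    j / r + (j - m * r) < m + ε := by
  rcases lt_or_ge j (m * r) with hjm | hjm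
  · have := Nat.div_lt_of_lt_mul (mul_comm m r ▸ hjm)
    omega
  · obtain ⟨t, rfl⟩ := Nat.exists_eq_add_of_le hjm
    rw [Nat.mul_add_div_eq (by omega)]
    omega

variable {M : Type*} [AddCommMonoid M]

lemma sum_range_mul_div (g : ℕ → M) (m r : ℕ) :
    ∑ j ∈ range (m * r), g (j / r) = r • ∑ i ∈ range m, g i := by
  induction m with
  | zero => simp
  | succ m ih =>
    rw [Nat.add_one_mul, sum_range_add, ih, sum_range_succ, smul_add]
    congr 1
    rw [sum_congr rfl fun t ht => by rw [Nat.mul_add_div_eq (mem_range.1 ht)], sum_const,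
      card_range]

lemma sum_fin_div (g : ℕ → M) (hε : ε ≤ r) :
    ∑ j : Fin (m * r + ε), g (j / r) = r • ∑ i ∈ range m, g i + ε • g m := by
  rw [Fin.sum_univ_eq_sum_range (fun j => g (j / r)), sum_range_add, sum_range_mul_div]
  congr 1
  rw [sum_congr rfl fun t ht => by rw [Nat.mul_add_div_eq ((mem_range.1 ht).trans_le hε)],
    sum_const, card_range]

lemma sum_fin_div_add_sub (g : ℕ → M) (hε : ε ≤ r) :
    ∑ j : Fin (m * r + ε), g (j / r + (j - m * r)) =
      r • ∑ i ∈ range m, g i + ∑ t ∈ range ε, g (m + t) := by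
  rw [Fin.sum_univ_eq_sum_range (fun j => g (j / r + (j - m * r))), sum_range_add,
    ← sum_range_mul_div]
  congr 1
  · exact sum_congr rfl fun j hj => by rw [Nat.sub_eq_zero_of_le (mem_range.1 hj).le, add_zero]
  · exact sum_congr rfl fun t ht => by
      rw [Nat.mul_add_div_eq ((mem_range.1 ht).trans_le hε), Nat.add_sub_cancel_left]

end BlockSums

section Sumsets

variable {G : Type*} [AddCommGroup G]

lemma sum_mem_genSum [DecidableEq G] {A : Finset G} (f : Fin h → G) (hfA : ∀ j, f j ∈ A)
    (hf : ∀ x, #{j | f j = x} ≤ r) : ∑ j, f j ∈ genSum r h A := by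
  refine ⟨fun x => #{j | f j = x}, hf, fun x hx => ?_, ?_, ?_⟩
  · obtain ⟨j, hj⟩ := card_ne_zero.1 hx
    exact (mem_filter.1 hj).2 ▸ hfA j
  · rw [← card_eq_sum_card_fiberwise (fun j _ => hfA j), card_univ, Fintype.card_fin]
  · rw [← sum_fiberwise_of_maps_to (fun j _ => hfA j)]
    refine sum_congr rfl fun x _ => ?_
    rw [sum_congr rfl fun j hj => (mem_filter.1 hj).2, sum_const]

lemma mem_genSum_one_iff {n : ℕ} {A : Finset G} {x : G} :
    x ∈ genSum 1 n A ↔ ∃ S ⊆ A, #S = n ∧ ∑ y ∈ S, y = x := by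
  classical
  constructor
  · rintro ⟨c, hc1, -, hcn, hcx⟩
    have hc : ∀ y, c y = 0 ∨ c y = 1 := fun y => Nat.le_one_iff_eq_zero_or_eq_one.1 (hc1 y)
    refine ⟨{y ∈ A | c y ≠ 0}, filter_subset _ _, ?_, ?_⟩
    · rw [card_filter, ← hcn]
      exact sum_congr rfl fun y _ => by rcases hc y with h | h <;> simp [h]
    · rw [← hcx, sum_filter]
      exact sum_congr rfl fun y _ => by rcases hc y with h | h <;> simp [h]
  · rintro ⟨S, hSA, rfl, rfl⟩
    refine ⟨fun y => if y ∈ S then 1 else 0, fun y => by by_cases y ∈ S <;> simp [*],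
      fun y hy => hSA (by simpa using hy), ?_, ?_⟩
    · rw [sum_boole, filter_mem_eq_inter, inter_eq_right.2 hSA, Nat.cast_id]
    · simp only [ite_smul, one_smul, zero_smul]
      rw [sum_ite_mem, inter_eq_right.2 hSA]

lemma genSum_one_nonempty {n : ℕ} {A : Finset G} (hn : n ≤ #A) : (genSum 1 n A).Nonempty := by
  obtain ⟨S, hSA, hS⟩ := exists_subset_card_eq hn
  exact ⟨_, mem_genSum_one_iff.2 ⟨S, hSA, hS, rfl⟩⟩

lemma iterSum_nonempty {n : ℕ} {S : Set G} (hS : S.Nonempty) : (iterSum n S).Nonempty :=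
  ⟨_, fun _ => hS.some, fun _ => hS.some_mem, rfl⟩

lemma genSum_finite (r h : ℕ) (A : Finset G) : (genSum r h A).Finite := by
  refine (Set.finite_range fun c : A → Fin (r + 1) => ∑ y : A, (c y : ℕ) • (y : G)).subset ?_
  rintro _ ⟨c, hc, -, -, rfl⟩
  exact ⟨fun y => ⟨c y, Nat.lt_succ_of_le (hc y)⟩, sum_coe_sort A fun y => c y • y⟩

lemma neg_genSum_subset [DecidableEq G] (r h : ℕ) (A : Finset G) :
    -genSum r h A ⊆ genSum r h (-A) := by
  rintro x ⟨c, hc, hcA, hcn, hcx⟩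
  have hsum : ∀ f : G → G, ∑ y ∈ -A, f y = ∑ y ∈ A, f (-y) := fun f => by
    rw [neg_def, sum_image neg_injective.injOn]
  refine ⟨fun y => c (-y), fun y => hc _, fun y hy => mem_neg'.2 (hcA _ hy), ?_, ?_⟩
  · simpa [hsum] using hcn
  · rw [hsum, ← neg_neg x, ← hcx, ← sum_neg_distrib]
    simp

lemma genSum_neg [DecidableEq G] (r h : ℕ) (A : Finset G) :
    genSum r h (-A) = -genSum r h A := by
  refine Set.Subset.antisymm ?_ (neg_genSum_subset r h A)
  simpa using Set.neg_subset_neg.2 (neg_genSum_subset r h (-A))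

lemma iterSum_neg (n : ℕ) (S : Set G) : iterSum n (-S) = -iterSum n S := by
  ext x
  constructor
  · rintro ⟨f, hf, rfl⟩
    exact ⟨fun i => -f i, hf, by simp⟩
  · rintro ⟨f, hf, hfx⟩
    exact ⟨fun i => -f i, by simpa using hf, by simp [hfx]⟩

variable [PartialOrder G] [IsOrderedAddMonoid G] {a : ℕ → G}

lemma sum_range_le_of_mem_genSum_one (ha : StrictMono a) {A : Finset G}
    (hA : ↑A ⊆ Set.range a) {n : ℕ} {x : G} (hx : x ∈ genSum 1 n A) :
    ∑ i ∈ range n, a i ≤ x := by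
  classical
  obtain ⟨S, hSA, rfl, rfl⟩ := mem_genSum_one_iff.1 hx
  have hinj : Set.InjOn a (a ⁻¹' ↑S) := ha.injective.injOn
  have hS : ∀ y ∈ S, y ∈ Set.range a := fun y hy => hA (hSA hy)
  calc ∑ i ∈ range #S, a i = ∑ i ∈ range #(S.preimage a hinj), a i := by
        rw [card_preimage, filter_true_of_mem hS]
    _ ≤ ∑ i ∈ S.preimage a hinj, a i := sum_range_card_le_sum ha.monotone _
    _ = ∑ y ∈ S, y := sum_preimage a S hinj id fun y hy hy' => (hy' (hS y hy)).elim

lemma nsmul_le_of_mem_iterSum {n : ℕ} {S : Set G} {c : G} (hc : ∀ y ∈ S, c ≤ y) {x : G}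
    (hx : x ∈ iterSum n S) : n • c ≤ x := by
  obtain ⟨f, hf, rfl⟩ := hx
  simpa using sum_le_sum fun i (_ : i ∈ univ) => hc _ (hf i)

lemma le_of_mem_iterSum_add_genSum_one (ha : StrictMono a) {A : Finset G}
    (hA : ↑A ⊆ Set.range a) {s n₁ n₂ : ℕ} {y : G}
    (hy : y ∈ iterSum s (genSum 1 n₁ A) + genSum 1 n₂ A) :
    s • ∑ i ∈ range n₁, a i + ∑ i ∈ range n₂, a i ≤ y := by
  obtain ⟨u, hu, v, hv, rfl⟩ := hy
  exact add_le_add (nsmul_le_of_mem_iterSum (fun _ => sum_range_le_of_mem_genSum_one ha hA) hu)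
    (sum_range_le_of_mem_genSum_one ha hA hv)

end Sumsets

/-- For monotone `p` the second condition says exactly that no value is taken more than `r`
times. -/
def RepeatsAtMost (r : ℕ) (p : Fin h → ℕ) : Prop :=
  Monotone p ∧ ∀ i j : Fin h, (i : ℕ) + r ≤ j → p i < p j

lemma repeatsAtMost_div (hr : 0 < r) : RepeatsAtMost r fun j : Fin h => (j : ℕ) / r :=
  ⟨fun _ _ hij => Nat.div_le_div_right hij, fun i j hij =>
    (Nat.lt_add_one _).trans_le <| by
      rw [← Nat.add_div_right _ hr]; exact Nat.div_le_div_right hij⟩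

namespace RepeatsAtMost

variable {p p' : Fin h → ℕ}

lemma add_monotone (hp : RepeatsAtMost r p) {q : Fin h → ℕ} (hq : Monotone q) :
    RepeatsAtMost r (p + q) :=
  ⟨hp.1.add hq, fun i j hij => add_lt_add_of_lt_of_le (hp.2 i j hij) (hq (by omega))⟩

lemma rev (hp : RepeatsAtMost r p) {K : ℕ} (hK : ∀ j, p j ≤ K) :
    RepeatsAtMost r fun j => K - p j.rev := by
  refine ⟨fun i j hij => Nat.sub_le_sub_left (hp.1 (Fin.rev_le_rev.2 hij)) K, fun i j hij => ?_⟩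
  have := hp.2 j.rev i.rev (by simp only [Fin.val_rev]; omega)
  have := hK i.rev
  dsimp only
  omega

lemma card_fiber_le {G : Type*} [DecidableEq G] (hp : RepeatsAtMost r p) {a : ℕ → G}
    (ha : a.Injective) (x : G) : #{j | a (p j) = x} ≤ r := by
  rw [← card_map Fin.valEmbedding]
  apply card_le_of_forall_lt_add
  simp only [mem_map, mem_filter, mem_univ, true_and, Fin.valEmbedding_apply]
  rintro _ ⟨i, hi, rfl⟩ _ ⟨j, hj, rfl⟩
  by_contra! hij
  exact (hp.2 i j hij).ne (ha (hi.trans hj.symm))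

lemma sum_mem_genSum {G : Type*} [AddCommGroup G] (hp : RepeatsAtMost r p) {a : ℕ → G}
    (ha : a.Injective) {A : Finset G} (hA : ∀ j, a (p j) ∈ A) :
    ∑ j, a (p j) ∈ genSum r h A := by
  classical
  exact _root_.sum_mem_genSum _ hA (hp.card_fiber_le ha)

lemma update_sub_one (hp : RepeatsAtMost r p) (hp' : RepeatsAtMost r p') {j₀ : Fin h}
    (hlt : p j₀ < p' j₀) (hbelow : ∀ i < j₀, p i = p' i) :
    RepeatsAtMost r (Function.update p' j₀ (p' j₀ - 1)) := by
  constructor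
  · intro i j hij
    simp only [Function.update_apply]
    split_ifs with hi hj hj
    · rfl
    · subst hi; have := hp'.1 hij; omega
    · subst hj; have := hp.1 hij; have := hbelow i (lt_of_le_of_ne hij hi); omega
    · exact hp'.1 hij
  · intro i j hij
    simp only [Function.update_apply]
    split_ifs with hi hj hj
    · subst hi hj; have := hp'.2 _ _ hij; omega
    · subst hi; have := hp'.2 _ _ hij; omega
    · subst hj
      have := hp.2 _ _ hij
      have := hbelow i (lt_of_le_of_ne (Fin.le_def.2 (by omega)) hi)
      omega
    · exact hp'.2 _ _ hij

theorem add_one_le_encard_inter_Icc {M : Type*} [AddCommMonoid M] [LinearOrder M]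
    [IsOrderedCancelAddMonoid M] {a : ℕ → M} (ha : StrictMono a) {S : Set M}
    (hp : RepeatsAtMost r p) (hp' : RepeatsAtMost r p') (hle : p ≤ p')
    (hS : ∀ q, RepeatsAtMost r q → q ≤ p' → ∑ j, a (q j) ∈ S) :
    ((∑ j, (p' j - p j) : ℕ) + 1 : ℕ∞) ≤
      (S ∩ Set.Icc (∑ j, a (p j)) (∑ j, a (p' j))).encard := by
  induction hd : ∑ j, (p' j - p j) generalizing p' with
  | zero =>
    obtain rfl : p' = p := funext fun j => by
      have := sum_eq_zero_iff.1 hd j (mem_univ _)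
      have : p j ≤ p' j := hle j
      omega
    simpa [Set.Icc_self] using hS p' hp' le_rfl
  | succ d ih =>
    obtain ⟨j₀, hj₀ : p j₀ < p' j₀, hmin⟩ := wellFounded_lt.has_min {j | p j < p' j} <| by
      by_contra! hall
      have : ∑ j, (p' j - p j) = 0 := sum_eq_zero fun j _ => by
        have : ¬ p j < p' j := Set.eq_empty_iff_forall_notMem.1 hall j
        have : p j ≤ p' j := hle j
        omega
      omega
    have hbelow : ∀ i < j₀, p i = p' i := fun i hi =>
      le_antisymm (hle i) (not_lt.1 fun hlt => hmin i hlt hi)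
    set p'' := Function.update p' j₀ (p' j₀ - 1)
    have hlow : p ≤ p'' := fun j => by
      simp only [p'', Function.update_apply]; split_ifs with hj
      · subst hj; exact Nat.le_sub_one_of_lt hj₀
      · exact hle j
    have hhigh : p'' ≤ p' := fun j => by
      simp only [p'', Function.update_apply]; split_ifs with hj
      · subst hj; exact Nat.sub_le _ _
      · rfl
    have hd'' : ∑ j, (p'' j - p j) = d := by
      have : ∑ j, (p' j - p j) = ∑ j, ((p'' j - p j) + if j = j₀ then 1 else 0) :=
        sum_congr rfl fun j _ => by
          simp only [p'', Function.update_apply]; split_ifs with hj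
          · subst hj; omega
          · rfl
      rw [sum_add_distrib, sum_ite_eq'] at this
      simp only [mem_univ, if_true] at this
      omega
    have hlt : ∑ j, a (p'' j) < ∑ j, a (p' j) :=
      sum_lt_sum (fun j _ => ha.monotone (hhigh j))
        ⟨j₀, mem_univ _, ha (by simp only [p'', Function.update_self]; omega)⟩
    have hlo : ∑ j, a (p j) ≤ ∑ j, a (p' j) := sum_le_sum fun j _ => ha.monotone (hle j)
    calc ((d + 1 : ℕ) + 1 : ℕ∞) = ((d : ℕ) + 1 : ℕ∞) + 1 := by push_cast; rfl
      _ ≤ (S ∩ Set.Icc (∑ j, a (p j)) (∑ j, a (p'' j))).encard + 1 := by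
        gcongr
        exact ih (hp.update_sub_one hp' hj₀ hbelow) hlow
          (fun q hq hq' => hS q hq (hq'.trans hhigh)) hd''
      _ = (insert (∑ j, a (p' j)) (S ∩ Set.Icc (∑ j, a (p j)) (∑ j, a (p'' j)))).encard :=
        (Set.encard_insert_of_notMem fun hmem => hlt.not_ge hmem.2.2).symm
      _ ≤ (S ∩ Set.Icc (∑ j, a (p j)) (∑ j, a (p' j))).encard :=
        Set.encard_le_encard <| Set.insert_subset ⟨hS p' hp' le_rfl, hlo, le_rfl⟩ <|
          Set.inter_subset_inter_right _ (Set.Icc_subset_Icc_right hlt.le)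

end RepeatsAtMost

theorem sum_range_le_encard_lt_sumset (A : Finset ℤ) (hr : 0 < r) (hεr : ε ≤ r)
    (hA : m + ε ≤ #A) :
    ((∑ i ∈ range ε, i : ℕ) : ℕ∞) ≤ {x ∈ genSum r (m * r + ε) A |
      ∀ y ∈ iterSum (r - 1) (genSum 1 m A) + genSum 1 (m + ε) A, x < y}.encard := by
  obtain ⟨a, ha, haA⟩ := A.exists_strictMono_image_range
  set ps : Fin (m * r + ε) → ℕ := fun j => j / r
  -- `r` copies of each of `0, …, m - 1`, then `m, …, m + ε - 1` (the subtraction truncates)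
  set pb : Fin (m * r + ε) → ℕ := ps + fun j : Fin (m * r + ε) => (j : ℕ) - m * r
  have hps : RepeatsAtMost r ps := repeatsAtMost_div hr
  have hpb : RepeatsAtMost r pb :=
    hps.add_monotone fun _ _ hij => Nat.sub_le_sub_right hij (m * r)
  have hmem : ∀ q, RepeatsAtMost r q → q ≤ pb → ∑ j, a (q j) ∈ genSum r (m * r + ε) A :=
    fun q hq hqb => hq.sum_mem_genSum ha.injective fun j => haA ▸ mem_image_of_mem a
      (mem_range.2 (((hqb j).trans_lt (div_add_sub_lt j.2 hεr)).trans_le hA))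
  have hd : ∑ j, (pb j - ps j) = ∑ i ∈ range ε, i := by
    simp only [pb, Pi.add_apply, Nat.add_sub_cancel_left]
    rw [Fin.sum_univ_eq_sum_range (fun j => j - m * r), sum_range_add,
      sum_eq_zero fun j hj => Nat.sub_eq_zero_of_le (mem_range.1 hj).le, zero_add]
    simp
  have hA' : ↑A ⊆ Set.range a := by rw [← haA, coe_image]; exact Set.image_subset_range _ _
  have hmin : ∀ y ∈ iterSum (r - 1) (genSum 1 m A) + genSum 1 (m + ε) A,
      ∑ j, a (pb j) ≤ y := fun y hy => by
    calc ∑ j, a (pb j) = ∑ j : Fin (m * r + ε), a (j / r + (j - m * r)) := rfl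
      _ = (r - 1) • ∑ i ∈ range m, a i + ∑ i ∈ range (m + ε), a i := by
        rw [sum_fin_div_add_sub a hεr, sum_range_add, ← add_assoc, ← succ_nsmul,
          Nat.sub_add_cancel hr]
      _ ≤ y := le_of_mem_iterSum_add_genSum_one ha hA' hy
  have hchain := hps.add_one_le_encard_inter_Icc ha hpb (fun j => Nat.le_add_right _ _) hmem
  rw [hd] at hchain
  refine (ENat.add_le_add_iff_right ENat.one_ne_top).1 (hchain.trans ?_)
  refine (Set.encard_le_encard fun x hx => ?_).trans (Set.encard_insert_le _ (∑ j, a (pb j)))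
  obtain ⟨hx, -, hxb⟩ := hx
  rcases hxb.eq_or_lt with rfl | hlt
  · exact Set.mem_insert _ _
  · exact Set.mem_insert_of_mem _ ⟨hx, fun y hy => hlt.trans_le (hmin y hy)⟩

theorem sum_range_le_encard_gt_sumset (A : Finset ℤ) (hr : 0 < r) (hεr : ε ≤ r)
    (hA : m + ε ≤ #A) :
    ((∑ i ∈ range ε, i : ℕ) : ℕ∞) ≤ {x ∈ genSum r (m * r + ε) A |
      ∀ y ∈ iterSum (r - 1) (genSum 1 m A) + genSum 1 (m + ε) A, y < x}.encard := by
  have key := sum_range_le_encard_lt_sumset (-A) hr hεr (by rwa [card_neg])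
  rw [genSum_neg, genSum_neg, genSum_neg, iterSum_neg, ← neg_add] at key
  convert key using 1
  rw [← Set.encard_preimage_of_bijective neg_bijective]
  congr 1
  ext x
  simp only [Set.mem_preimage, Set.mem_ofPred_eq, Set.mem_neg]
  refine and_congr_right fun _ => ⟨fun h y hy => ?_, fun h z hz => ?_⟩
  · exact neg_lt_neg_iff.1 (h _ hy)
  · exact lt_neg.1 (h (-z) (by rwa [neg_neg]))

theorem mul_sub_one_le_ncard_genSum_diff (A : Finset ℤ) (hr : 0 < r) (hεr : ε ≤ r)
    (hA : m + ε ≤ #A) :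
    ε * (ε - 1) ≤ (genSum r (m * r + ε) A \
      (iterSum (r - 1) (genSum 1 m A) + genSum 1 (m + ε) A)).ncard := by
  set B := iterSum (r - 1) (genSum 1 m A) + genSum 1 (m + ε) A
  set L := {x ∈ genSum r (m * r + ε) A | ∀ y ∈ B, x < y}
  set U := {x ∈ genSum r (m * r + ε) A | ∀ y ∈ B, y < x}
  obtain ⟨b, hb⟩ : B.Nonempty :=
    (iterSum_nonempty (genSum_one_nonempty (by omega))).add (genSum_one_nonempty hA)
  have hdisj : Disjoint L U :=
    Set.disjoint_left.2 fun x hxL hxU => (hxL.2 b hb).asymm (hxU.2 b hb)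
  have hsub : L ∪ U ⊆ genSum r (m * r + ε) A \ B :=
    Set.union_subset (fun x hx => ⟨hx.1, fun hxB => lt_irrefl x (hx.2 x hxB)⟩)
      (fun x hx => ⟨hx.1, fun hxB => lt_irrefl x (hx.2 x hxB)⟩)
  rw [← sum_range_id_mul_two, ← Nat.cast_le (α := ℕ∞),
    ((genSum_finite r _ A).sdiff (t := B)).cast_ncard_eq, Nat.cast_mul, Nat.cast_two,
    mul_two]
  calc _ ≤ L.encard + U.encard :=
        add_le_add (sum_range_le_encard_lt_sumset A hr hεr hA)
          (sum_range_le_encard_gt_sumset A hr hεr hA)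
    _ = (L ∪ U).encard := (Set.encard_union_eq hdisj).symm
    _ ≤ _ := Set.encard_le_encard hsub

theorem le_ncard_genSum (A : Finset ℤ) (hε : 1 ≤ ε) (hεr : ε ≤ r) (hmA : m < #A) :
    ((m * r + ε : ℕ) : ℤ) * #A - m ^ 2 * r + 1 - 2 * m * ε - ε ≤
      (genSum r (m * r + ε) A).ncard := by
  obtain ⟨a, ha, haA⟩ := A.exists_strictMono_image_range
  set ps : Fin (m * r + ε) → ℕ := fun j => j / r
  set pe : Fin (m * r + ε) → ℕ := fun j => (#A - 1) - ps j.rev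
  have hpair : ∀ j, ps j + ps j.rev ≤ #A - 1 := fun j => by
    have := Nat.div_add_div_le_add_div (x := j) (y := m * r + ε - (j + 1)) (z := r)
    rw [show j + (m * r + ε - (j + 1)) = m * r + (ε - 1) by omega,
      Nat.mul_add_div_eq (by omega)] at this
    simp only [ps, Fin.val_rev]
    omega
  have hps : RepeatsAtMost r ps := repeatsAtMost_div (by omega)
  have hpe : RepeatsAtMost r pe := hps.rev fun j => by have := hpair j; omega
  have hle : ps ≤ pe := fun j => by have := hpair j; simp only [pe]; omega
  have hmem : ∀ q, RepeatsAtMost r q → q ≤ pe → ∑ j, a (q j) ∈ genSum r (m * r + ε) A :=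
    fun q hq hqe => hq.sum_mem_genSum ha.injective fun j => haA ▸ mem_image_of_mem a
      (mem_range.2 (by have := hqe j; simp only [pe] at this; omega))
  have hchain := hps.add_one_le_encard_inter_Icc ha hpe hle hmem
  have hd : ∑ j, (pe j - ps j) + 2 * ∑ j, ps j = (m * r + ε) * (#A - 1) := by
    have hrev : ∑ j : Fin (m * r + ε), ps j.rev = ∑ j, ps j :=
      Fintype.sum_equiv Fin.revPerm _ _ fun _ => rfl
    calc ∑ j, (pe j - ps j) + 2 * ∑ j, ps j = ∑ j, (pe j - ps j + ps j.rev + ps j) := by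
          rw [sum_add_distrib, sum_add_distrib, hrev]; ring
      _ = ∑ _j : Fin (m * r + ε), (#A - 1) :=
          sum_congr rfl fun j _ => by have := hpair j; simp only [pe]; omega
      _ = (m * r + ε) * (#A - 1) := by simp
  have hsum : ∑ j, ps j = r * ∑ i ∈ range m, i + ε * m := by
    simpa using sum_fin_div (m := m) id hεr
  have hgauss : (∑ i ∈ range m, i) * 2 + m = m * m := by
    rw [sum_range_id_mul_two, Nat.mul_sub_one, Nat.sub_add_cancel (Nat.le_mul_self m)]
  have hN : ∑ j, (pe j - ps j) + 1 ≤ (genSum r (m * r + ε) A).ncard := by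
    rw [← Nat.cast_le (α := ℕ∞), (genSum_finite r _ A).cast_ncard_eq, Nat.cast_add,
      Nat.cast_one]
    exact hchain.trans (Set.encard_le_encard Set.inter_subset_left)
  zify [(by omega : 1 ≤ #A)] at hd hsum hgauss hN ⊢
  nlinarith

theorem stmt15_general (A : Finset ℤ) (k h m r ε : ℕ)
    (hk : A.card = k)
    (hh : h = m * r + ε) (hε1 : 1 ≤ ε) (hε2 : ε ≤ r - 1) (hmk : m + ε ≤ k) :
    ((genSum r h A \ (iterSum (r - 1) (genSum 1 m A) + genSum 1 (m + ε) A)).ncard : ℤ)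
        ≥ (ε : ℤ) ^ 2 - ε ∧
    ((genSum r h A).ncard : ℤ) ≥
      (h : ℤ) * k - (m : ℤ) ^ 2 * r + 1 - 2 * m * ε - ε := by
  subst hk hh
  refine ⟨?_, le_ncard_genSum A hε1 (by omega) (by omega)⟩
  have := mul_sub_one_le_ncard_genSum_diff A (by omega) (by omega : ε ≤ r) hmk
  zify [hε1] at this
  linarith

theorem stmt15 (A : Finset ℤ) (k h m r ε : ℕ)
    (hA : A.Nonempty) (hk : A.card = k)
    (hh : h = m * r + ε) (hε1 : 1 ≤ ε) (hε2 : ε ≤ r - 1) (hmk : m + ε ≤ k) :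
    ((genSum r h A \ (iterSum (r - 1) (genSum 1 m A) + genSum 1 (m + ε) A)).ncard : ℤ)
        ≥ (ε : ℤ) ^ 2 - ε ∧
    ((genSum r h A).ncard : ℤ) ≥
      (h : ℤ) * k - (m : ℤ) ^ 2 * r + 1 - 2 * m * ε - ε :=
  stmt15_general A k h m r ε hk hh hε1 hε2 hmk
end
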